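/- arXiv:1109.0810 — 2 statements merged into one kernel-verified Lean document; each statement's English description precedes it below -/
import Mathlib

section
/- Let B₁(s) = ∏_{p ≤ P} |∑_{k=0}^{β} p^{-sk}|. For s = σ + it with 1/2 + Δ ≤ σ ≤ 1 - Δ, 0 < Δ < 1/4, integer β ≥ 2, there is an absolute constant A such that exp(-(A/Δ)·P^{1/2-Δ}) < B₁(s) < exp((A/Δ)·P^{1/2-Δ}). -/
/-!
Each factor is a geometric sum `∑_{k ≤ β} z^k` with `z = p^{-s}`, `|z| = p^{-σ} ≤ 2^{-1/2} < 3/4`.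
For `|z| ≤ 3/4` its modulus lies between `(1 - |z|^{β+1}) / (1 + |z|)` and `1 / (1 - |z|)`, hence
between `exp(-4|z|)` and `exp(4|z|)`; this needs `β ≥ 2`. So `|log B₁(s)|` is at most
`4 ∑_{p ≤ P} p^{-σ} ≤ 4 ∑_{n ≤ P} n^{-σ} ≤ 4 P^{1-σ} / (1-σ) ≤ (4/Δ) P^{1/2-Δ}`, where the bound
on `∑ n^{-σ}` telescopes `(1-σ) n^{-σ} ≤ n^{1-σ} - (n-1)^{1-σ}` (Bernoulli's inequality).
-/

open Real Complex Finset

/-- The primes `p ≤ P`. -/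
noncomputable def primesUpTo (P : ℝ) : Finset ℕ :=
  (Finset.range (⌊P⌋₊ + 1)).filter (fun p => p.Prime ∧ (p : ℝ) ≤ P)

lemma inv_one_sub_le_exp {x : ℝ} (hx0 : 0 ≤ x) (hx : x ≤ 3 / 4) : (1 - x)⁻¹ ≤ Real.exp (4 * x) := by
  calc (1 - x)⁻¹ ≤ 1 + 4 * x := by
        rw [inv_le_iff_one_le_mul₀ (by linarith)]; nlinarith
    _ ≤ Real.exp (4 * x) := by linarith [Real.add_one_le_exp (4 * x)]

lemma exp_neg_le_one_sub_pow_div {x : ℝ} (hx0 : 0 ≤ x) (hx : x ≤ 3 / 4) {n : ℕ} (hn : 3 ≤ n) :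
    Real.exp (-(4 * x)) ≤ (1 - x ^ n) / (1 + x) := by
  have hxn : x ^ n ≤ x ^ 3 := pow_le_pow_of_le_one hx0 (by linarith) hn
  calc Real.exp (-(4 * x)) = (Real.exp (4 * x))⁻¹ := exp_neg _
    _ ≤ (1 + 4 * x)⁻¹ := inv_anti₀ (by positivity) (by linarith [Real.add_one_le_exp (4 * x)])
    _ ≤ (1 - x ^ 3) / (1 + x) := by
        rw [inv_eq_one_div, div_le_div_iff₀ (by positivity) (by positivity)]
        have : x ^ 2 + 4 * x ^ 3 ≤ 3 := by nlinarith
        nlinarith [mul_le_mul_of_nonneg_left this hx0]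
    _ ≤ (1 - x ^ n) / (1 + x) := by gcongr

section GeomSum

variable {𝕜 : Type*} [NormedDivisionRing 𝕜]

lemma norm_geom_sum_le_inv_one_sub {z : 𝕜} (hz : ‖z‖ < 1) (n : ℕ) :
    ‖∑ k ∈ range n, z ^ k‖ ≤ (1 - ‖z‖)⁻¹ :=
  calc ‖∑ k ∈ range n, z ^ k‖ ≤ ∑ k ∈ range n, ‖z‖ ^ k := by
        simpa only [norm_pow] using norm_sum_le (range n) (z ^ ·)
    _ ≤ (1 - ‖z‖)⁻¹ := by
        simpa only [← range_eq_Ico, pow_zero, one_div] using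
          geom_sum_Ico_le_of_lt_one (m := 0) (n := n) (norm_nonneg z) hz

lemma one_sub_norm_pow_div_le_norm_geom_sum {z : 𝕜} (hz : z ≠ 1) (n : ℕ) :
    (1 - ‖z‖ ^ n) / (1 + ‖z‖) ≤ ‖∑ k ∈ range n, z ^ k‖ := by
  rw [geom_sum_eq hz, norm_div, ← norm_pow]
  refine div_le_div₀ (norm_nonneg _) ?_ (norm_pos_iff.2 (sub_ne_zero.2 hz)) ?_
  · simpa only [norm_sub_rev, norm_one] using norm_sub_norm_le (1 : 𝕜) (z ^ n)
  · simpa only [norm_one, add_comm] using norm_sub_le z 1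

lemma norm_geom_sum_le_exp {z : 𝕜} (hz : ‖z‖ ≤ 3 / 4) (n : ℕ) :
    ‖∑ k ∈ range n, z ^ k‖ ≤ Real.exp (4 * ‖z‖) :=
  (norm_geom_sum_le_inv_one_sub (by linarith) n).trans (inv_one_sub_le_exp (norm_nonneg z) hz)

lemma exp_neg_le_norm_geom_sum {z : 𝕜} (hz : ‖z‖ ≤ 3 / 4) {n : ℕ} (hn : 3 ≤ n) :
    Real.exp (-(4 * ‖z‖)) ≤ ‖∑ k ∈ range n, z ^ k‖ := by
  have hz1 : z ≠ 1 := by rintro rfl; norm_num at hz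
  exact (exp_neg_le_one_sub_pow_div (norm_nonneg z) hz hn).trans
    (one_sub_norm_pow_div_le_norm_geom_sum hz1 n)

variable {ι : Type*} (s : Finset ι) {z : ι → 𝕜}

lemma prod_norm_geom_sum_le_exp (hz : ∀ i ∈ s, ‖z i‖ ≤ 3 / 4) (n : ℕ) :
    ∏ i ∈ s, ‖∑ k ∈ range n, z i ^ k‖ ≤ Real.exp (4 * ∑ i ∈ s, ‖z i‖) := by
  rw [mul_sum, Real.exp_sum]
  exact prod_le_prod (fun _ _ ↦ norm_nonneg _) fun i hi ↦ norm_geom_sum_le_exp (hz i hi) n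

lemma exp_neg_le_prod_norm_geom_sum (hz : ∀ i ∈ s, ‖z i‖ ≤ 3 / 4) {n : ℕ} (hn : 3 ≤ n) :
    Real.exp (-(4 * ∑ i ∈ s, ‖z i‖)) ≤ ∏ i ∈ s, ‖∑ k ∈ range n, z i ^ k‖ := by
  rw [mul_sum, ← sum_neg_distrib, Real.exp_sum]
  exact prod_le_prod (fun _ _ ↦ (exp_pos _).le) fun i hi ↦ exp_neg_le_norm_geom_sum (hz i hi) hn

end GeomSum

lemma mul_rpow_neg_le_rpow_sub_rpow {σ x : ℝ} (hσ0 : 0 ≤ σ) (hσ1 : σ ≤ 1) (hx : 1 ≤ x) :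
    (1 - σ) * x ^ (-σ) ≤ x ^ (1 - σ) - (x - 1) ^ (1 - σ) := by
  have hx0 : 0 < x := by linarith
  -- Bernoulli's inequality `(1 - 1/x) ^ (1 - σ) ≤ 1 - (1 - σ)/x`, scaled by `x ^ (1 - σ)`
  have bernoulli := rpow_one_add_le_one_add_mul_self
    (neg_le_neg (inv_le_one_of_one_le₀ hx)) (p := 1 - σ) (by linarith) (by linarith)
  have hsplit : (x - 1) ^ (1 - σ) = (1 + -x⁻¹) ^ (1 - σ) * x ^ (1 - σ) := by
    rw [← mul_rpow (by linarith [inv_le_one_of_one_le₀ hx]) hx0.le]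
    congr 1; field_simp; ring
  have hshift : x ^ (1 - σ) = x ^ (-σ) * x := by
    rw [← rpow_add_one hx0.ne']; ring_nf
  calc (1 - σ) * x ^ (-σ) = x ^ (1 - σ) - (1 + (1 - σ) * -x⁻¹) * x ^ (1 - σ) := by
        rw [hshift]; field_simp; ring
    _ ≤ x ^ (1 - σ) - (x - 1) ^ (1 - σ) := by
        rw [hsplit]; gcongr

lemma sum_range_rpow_neg_le {σ : ℝ} (h0 : 0 < σ) (h1 : σ < 1) (N : ℕ) :
    ∑ n ∈ range (N + 1), (n : ℝ) ^ (-σ) ≤ N ^ (1 - σ) / (1 - σ) := by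
  rw [le_div_iff₀ (sub_pos.2 h1), sum_range_succ', Nat.cast_zero,
    zero_rpow (neg_ne_zero.2 h0.ne'), add_zero, sum_mul]
  calc ∑ i ∈ range N, ((i + 1 : ℕ) : ℝ) ^ (-σ) * (1 - σ)
      ≤ ∑ i ∈ range N, (((i + 1 : ℕ) : ℝ) ^ (1 - σ) - (i : ℝ) ^ (1 - σ)) := by
        gcongr with i
        have := mul_rpow_neg_le_rpow_sub_rpow h0.le h1.le (x := ((i + 1 : ℕ) : ℝ)) (by simp)
        push_cast at this ⊢
        rw [add_sub_cancel_right] at this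
        linarith
    _ = N ^ (1 - σ) := by
        rw [sum_range_sub (fun i : ℕ ↦ (i : ℝ) ^ (1 - σ))]
        simp [zero_rpow (sub_ne_zero.2 h1.ne')]

lemma two_le_of_mem_primesUpTo {P : ℝ} {p : ℕ} (hp : p ∈ primesUpTo P) : 2 ≤ p :=
  (mem_filter.1 hp).2.1.two_le

lemma sum_primesUpTo_rpow_neg_le {σ : ℝ} (h0 : 0 < σ) (h1 : σ < 1) {P : ℝ} (hP : 0 ≤ P) :
    ∑ p ∈ primesUpTo P, (p : ℝ) ^ (-σ) ≤ P ^ (1 - σ) / (1 - σ) :=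
  calc ∑ p ∈ primesUpTo P, (p : ℝ) ^ (-σ) ≤ ∑ n ∈ range (⌊P⌋₊ + 1), (n : ℝ) ^ (-σ) :=
        sum_le_sum_of_subset_of_nonneg (filter_subset _ _) fun _ _ _ ↦ by positivity
    _ ≤ (⌊P⌋₊ : ℝ) ^ (1 - σ) / (1 - σ) := sum_range_rpow_neg_le h0 h1 _
    _ ≤ P ^ (1 - σ) / (1 - σ) := by
        gcongr
        exact Nat.floor_le hP

lemma rpow_neg_le_three_quarters {x σ : ℝ} (hx : 2 ≤ x) (hσ : 1 / 2 ≤ σ) : x ^ (-σ) ≤ 3 / 4 := by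
  have hsq : (x ^ (-σ)) ^ 2 ≤ 1 / 2 :=
    calc (x ^ (-σ)) ^ 2 = x ^ (-(2 * σ)) := by
          rw [← rpow_natCast, ← rpow_mul (by linarith)]; ring_nf
      _ ≤ x ^ (-1 : ℝ) := rpow_le_rpow_of_exponent_le (by linarith) (by linarith)
      _ ≤ 1 / 2 := by rw [rpow_neg_one, one_div]; exact inv_anti₀ (by norm_num) hx
  nlinarith [rpow_nonneg (show (0 : ℝ) ≤ x by linarith) (-σ)]

/-- Lemma 1: for `s = σ + it` with `1/2 + Δ ≤ σ ≤ 1 - Δ`, `0 < Δ < 1/4`, `β ≥ 2`,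
the product `B₁(s) = ∏_{p ≤ P} |∑_{k=0}^{β} p^{-sk}|` satisfies
`exp(-(A/Δ)·P^{1/2-Δ}) < B₁(s) < exp((A/Δ)·P^{1/2-Δ})` for an absolute constant `A`. -/
theorem stmt_8 :
    ∃ A > (0 : ℝ), ∀ (P Δ σ t : ℝ) (β : ℕ), 2 ≤ P → 0 < Δ → Δ < 1 / 4 → 2 ≤ β →
      1 / 2 + Δ ≤ σ → σ ≤ 1 - Δ →
      Real.exp (-(A / Δ) * P ^ (1 / 2 - Δ)) <
        (∏ p ∈ primesUpTo P,
          ‖∑ k ∈ Finset.range (β + 1), ((p : ℂ) ^ (-(σ + t * Complex.I))) ^ k‖) ∧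
      (∏ p ∈ primesUpTo P,
          ‖∑ k ∈ Finset.range (β + 1), ((p : ℂ) ^ (-(σ + t * Complex.I))) ^ k‖) <
        Real.exp ((A / Δ) * P ^ (1 / 2 - Δ)) := by
  refine ⟨5, by norm_num, fun P Δ σ t β hP hΔ hΔ4 hβ hσ1 hσ2 ↦ ?_⟩
  set z : ℕ → ℂ := fun p ↦ (p : ℂ) ^ (-(σ + t * Complex.I))
  have hnorm : ∀ p ∈ primesUpTo P, ‖z p‖ = (p : ℝ) ^ (-σ) := fun p hp ↦ by
    rw [norm_natCast_cpow_of_pos (two_pos.trans_le (two_le_of_mem_primesUpTo hp))]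
    simp
  have hsmall : ∀ p ∈ primesUpTo P, ‖z p‖ ≤ 3 / 4 := fun p hp ↦ by
    rw [hnorm p hp]
    exact rpow_neg_le_three_quarters (mod_cast two_le_of_mem_primesUpTo hp) (by linarith)
  have hsum : 4 * ∑ p ∈ primesUpTo P, ‖z p‖ < 5 / Δ * P ^ (1 / 2 - Δ) :=
    calc 4 * ∑ p ∈ primesUpTo P, ‖z p‖ ≤ 4 * (P ^ (1 - σ) / (1 - σ)) := by
          rw [sum_congr rfl hnorm]
          gcongr
          exact sum_primesUpTo_rpow_neg_le (σ := σ) (by linarith) (by linarith) (by linarith)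
      _ ≤ 4 * (P ^ (1 / 2 - Δ) / Δ) := by
          gcongr 4 * ?_
          exact div_le_div₀ (by positivity)
            (rpow_le_rpow_of_exponent_le (by linarith) (by linarith)) hΔ (by linarith)
      _ < 5 / Δ * P ^ (1 / 2 - Δ) := by
          have : 0 < P ^ (1 / 2 - Δ) / Δ := by positivity
          rw [div_mul_eq_mul_div, mul_div_assoc]
          linarith
  constructor
  · refine lt_of_lt_of_le ?_ (exp_neg_le_prod_norm_geom_sum _ hsmall (by omega))
    rw [Real.exp_lt_exp]
    linarith
  · refine (prod_norm_geom_sum_le_exp _ hsmall _).trans_lt ?_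
    rw [Real.exp_lt_exp]
    linarith
end

section
/- Suppose a function ζ̃ satisfies |ζ̃(s)| ≥ |χ(s)|·B₂(s)·(Λ(s) - 1) where Λ(s) = B₁(s)/(|χ(s)|·B₂(s)), with B₂(s) ≥ exp(-A(ln P₀)^{1-ε}), |χ(s)| ≥ P₀^{-(2+ε)δ}, and Λ(s) ≥ P₀^{δ}, for δ ∈ (0, Δ₀]. Then |ζ̃(s)| > (1/P₀)·sinh((δ/2)·ln P₀) for all sufficiently large P₀. -/
open Real Filter

/-
With `L = log P₀`, the hypotheses give
`z ≥ P₀^{-(2+ε)δ} e^{-A L^{1-ε}} (P₀^δ - 1) = 2 e^{-A L^{1-ε}} P₀^{-(3/2+ε)δ} sinh(δL/2)`.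
Since `δ L ≤ √(2A) L^{1-ε/2}` and `L^{1-ε} ≤ L^{1-ε/2}`, the exponent
`A L^{1-ε} + (3/2+ε) δ L` is at most `((3/2+ε)√(2A) + A) L^{1-ε/2}`, which is `≤ L` as soon as
`L^{ε/2} ≥ (3/2+ε)√(2A) + A`. Then `2 e^{-A L^{1-ε}} P₀^{-(3/2+ε)δ} ≥ 2 e^{-L} > 1/P₀`.
-/

theorem rpow_mul_rpow_sub_one_eq_two_mul_sinh {x : ℝ} (hx : 0 < x) (a δ : ℝ) :
    x ^ a * (x ^ δ - 1) = 2 * x ^ (a + δ / 2) * sinh (δ / 2 * log x) := by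
  simp only [rpow_def_of_pos hx, sinh_eq, mul_sub, mul_one, ← exp_add]
  have h : 2 * exp (log x * (a + δ / 2)) * ((exp (δ / 2 * log x) - exp (-(δ / 2 * log x))) / 2)
      = exp (log x * (a + δ / 2) + δ / 2 * log x)
        - exp (log x * (a + δ / 2) + -(δ / 2 * log x)) := by
    rw [exp_add, exp_add]; ring
  rw [h]
  congr 2 <;> ring

theorem add_mul_rpow_le_self {ε k s A δ L : ℝ} (hε : 0 ≤ ε) (hk : 0 ≤ k) (hA : 0 ≤ A)
    (hL : 1 ≤ L) (hδ : δ ≤ s * L ^ (-(ε / 2))) (hC : k * s + A ≤ L ^ (ε / 2)) :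
    A * L ^ (1 - ε) + k * δ * L ≤ L := by
  have hL0 : 0 < L := by linarith
  have hsplit : L ^ (1 - ε / 2) = L ^ (-(ε / 2)) * L := by
    rw [sub_eq_neg_add, rpow_add hL0, rpow_one]
  have hA' : A * L ^ (1 - ε) ≤ A * L ^ (1 - ε / 2) := by
    gcongr
    linarith
  have hδ' : k * δ * L ≤ k * s * L ^ (1 - ε / 2) := by
    rw [hsplit, mul_assoc k, mul_assoc k, ← mul_assoc s]
    gcongr
  calc A * L ^ (1 - ε) + k * δ * L ≤ (k * s + A) * L ^ (1 - ε / 2) := by linarith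
    _ ≤ L ^ (ε / 2) * L ^ (1 - ε / 2) := by gcongr
    _ = L := by rw [← rpow_add hL0]; norm_num

theorem eventually_le_log_rpow (ε C : ℝ) (hε : 0 < ε) :
    ∀ᶠ P in atTop, 1 < P ∧ 1 ≤ log P ∧ C ≤ log P ^ (ε / 2) := by
  have h := (tendsto_rpow_atTop (half_pos hε)).comp tendsto_log_atTop
  filter_upwards [eventually_gt_atTop 1, tendsto_log_atTop.eventually_ge_atTop 1,
    h.eventually_ge_atTop C] with P h1 h2 h3 using ⟨h1, h2, h3⟩

theorem stmt_19_general (ε A : ℝ) (hε : 0 < ε) (hA : 0 < A) :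
    ∃ T₀ : ℝ, ∀ P₀ : ℝ, T₀ ≤ P₀ →
      ∀ δ z χa B₁ B₂ Λ : ℝ,
        0 < δ → δ ≤ Real.sqrt (2 * A) * (Real.log P₀) ^ (-(ε / 2)) →
        Λ = B₁ / (χa * B₂) →
        z ≥ χa * B₂ * (Λ - 1) →
        B₂ ≥ Real.exp (-A * (Real.log P₀) ^ (1 - ε)) →
        χa ≥ P₀ ^ (-(2 + ε) * δ) →
        Λ ≥ P₀ ^ δ →
        z > (1 / P₀) * Real.sinh ((δ / 2) * Real.log P₀) := by
  obtain ⟨T₀, hT₀⟩ :=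
    eventually_atTop.1 (eventually_le_log_rpow ε ((3 / 2 + ε) * √(2 * A) + A) hε)
  refine ⟨T₀, fun P₀ hP₀ δ z χa B₁ B₂ Λ hδ hδ₀ _ hz hB₂ hχ hΛ => ?_⟩
  obtain ⟨hP₁, hL, hC⟩ := hT₀ P₀ hP₀
  have hP : 0 < P₀ := by linarith
  set L := log P₀
  have hexp : A * L ^ (1 - ε) + (3 / 2 + ε) * δ * L ≤ L :=
    add_mul_rpow_le_self hε.le (by positivity) hA.le hL hδ₀ hC
  have hfactor : exp (-L) ≤ exp (-A * L ^ (1 - ε)) * P₀ ^ (-(2 + ε) * δ + δ / 2) := by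
    rw [rpow_def_of_pos hP, ← exp_add]
    gcongr
    linarith
  have hsinh : 0 < sinh (δ / 2 * L) := sinh_pos_iff.2 (by positivity)
  have hPδ : 0 ≤ P₀ ^ δ - 1 := sub_nonneg.2 (one_le_rpow hP₁.le hδ.le)
  calc 1 / P₀ * sinh (δ / 2 * L) = exp (-L) * sinh (δ / 2 * L) := by
        rw [exp_neg, exp_log hP, one_div]
    _ < 2 * (exp (-A * L ^ (1 - ε)) * P₀ ^ (-(2 + ε) * δ + δ / 2)) * sinh (δ / 2 * L) := by
        gcongr
        linarith [exp_pos (-L)]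
    _ = exp (-A * L ^ (1 - ε)) * (P₀ ^ (-(2 + ε) * δ) * (P₀ ^ δ - 1)) := by
        rw [rpow_mul_rpow_sub_one_eq_two_mul_sinh hP]; ring
    _ ≤ B₂ * (χa * (Λ - 1)) := by
        gcongr
        · exact (exp_pos _).le.trans hB₂
        · exact (rpow_pos_of_pos hP _).le.trans hχ
    _ ≤ z := by linarith

/-- Lemma 6 (inequality 8.4): if `|ζ̃(s)| ≥ |χ(s)|·B₂(s)·(Λ(s) - 1)` with
`Λ(s) = B₁(s)/(|χ(s)|·B₂(s))`, `B₂(s) ≥ exp(-A(ln P₀)^{1-ε})`,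
`|χ(s)| ≥ P₀^{-(2+ε)δ}` and `Λ(s) ≥ P₀^{δ}` for `δ ∈ (0, Δ₀]` with
`Δ₀ = √(2A)·(ln P₀)^{-ε/2}`, then `|ζ̃(s)| > (1/P₀)·sinh((δ/2)·ln P₀)` for all
sufficiently large `P₀`. -/
theorem stmt_19 (ε A : ℝ) (hε : 0 < ε) (hε1 : ε < 1) (hA : 0 < A) :
    ∃ T₀ : ℝ, ∀ P₀ : ℝ, T₀ ≤ P₀ →
      ∀ δ z χa B₁ B₂ Λ : ℝ,
        0 < δ → δ ≤ Real.sqrt (2 * A) * (Real.log P₀) ^ (-(ε / 2)) →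
        Λ = B₁ / (χa * B₂) →
        z ≥ χa * B₂ * (Λ - 1) →
        B₂ ≥ Real.exp (-A * (Real.log P₀) ^ (1 - ε)) →
        χa ≥ P₀ ^ (-(2 + ε) * δ) →
        Λ ≥ P₀ ^ δ →
        z > (1 / P₀) * Real.sinh ((δ / 2) * Real.log P₀) :=
  stmt_19_general ε A hε hA
end
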